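/- arXiv:1706.03755 — 2 statements merged into one kernel-verified Lean document; each statement's English description precedes it below -/
import Mathlib

section
/- For any x ≥ 2 and any multiplicative function f with |f(n)| ≤ 1 for all n, we have ∑_{n ≤ x} f(n) log n = ∑_{p prime, m ≥ 1, pm ≤ x} f(m) f(p) log p + O(x), where the implied constant is absolute. -/
open Finset MeasureTheory
open scoped Classical BigOperators

/-- The primes `p ≤ y`. -/
noncomputable def primesUpTo (y : ℝ) : Finset ℕ :=
  (Finset.Icc 1 ⌊y⌋₊).filter Nat.Prime

/-- The truncated Euler product `F_x(s) = ∏_{p ≤ x} (1 + ∑_{k ≥ 1} f(p^k) p^{-ks})`. -/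
noncomputable def Fx (f : ℕ → ℂ) (x : ℝ) (s : ℂ) : ℂ :=
  ∏ p ∈ primesUpTo x, (1 + ∑' k : ℕ, f (p ^ (k + 1)) / (p : ℂ) ^ (((k : ℂ) + 1) * s))

/-- `L(x)² = ∑_{|N| ≤ (log x)² + 1} (N²+1)⁻¹ sup_{|t-N| ≤ 1/2} |F_x(1+it)|²`. -/
noncomputable def Lsq (f : ℕ → ℂ) (x : ℝ) : ℝ :=
  ∑ N ∈ Finset.Icc (-⌊(Real.log x) ^ 2 + 1⌋) ⌊(Real.log x) ^ 2 + 1⌋,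
    (1 / ((N : ℝ) ^ 2 + 1)) *
      sSup ((fun t : ℝ => ‖Fx f x (1 + t * Complex.I)‖ ^ 2) ''
        Set.Icc ((N : ℝ) - 1 / 2) ((N : ℝ) + 1 / 2))

/-- The set `P_k` of primes `p` with `(log x)^4 < p ≤ x/2` and
`x^{1-e^{1-k}} < p ≤ x^{1-e^{-k}}`. -/
noncomputable def Pk (x : ℝ) (k : ℕ) : Finset ℕ :=
  (Finset.Icc 1 ⌊x⌋₊).filter (fun p => p.Prime ∧ (Real.log x) ^ 4 < (p : ℝ) ∧
    (p : ℝ) ≤ x / 2 ∧ x ^ (1 - Real.exp (1 - (k : ℝ))) < (p : ℝ) ∧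
    (p : ℝ) ≤ x ^ (1 - Real.exp (-(k : ℝ))))

/-- The triple convolution sum `S_k(x)`. -/
noncomputable def Sk (f : ℕ → ℂ) (x : ℝ) (k : ℕ) : ℂ :=
  ∑ p ∈ Pk x k, ∑ q ∈ primesUpTo (x / p), ∑ n ∈ Finset.Icc 1 ⌊x / (p * q)⌋₊,
    (f p * (Real.log p : ℂ) / (Real.log (x / p) : ℂ)) * f n * f q * (Real.log q : ℂ)

/-!
Since `log n = ∑_{d ∣ n} Λ(d)`, the left-hand sum equals `∑_{d ≤ x} Λ(d) ∑_{m ≤ x/d} f(dm)`.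
For a prime `d = p` we have `f(pm) = f(p) f(m)` unless `p ∣ m`, so the prime terms differ from
the right-hand side by at most `2 log p · x/p²`, while a proper prime power `d = p^k`, `k ≥ 2`,
contributes at most `x log p / p^k`. Summed over `p` and `k`, both errors are `O(x)` because
`∑ log n / n²` converges.
-/

open ArithmeticFunction

lemma log_div_sq_le_two_mul_rpow (n : ℕ) :
    Real.log n / (n : ℝ) ^ 2 ≤ 2 * (n : ℝ) ^ (-(3 / 2) : ℝ) := by
  rcases n.eq_zero_or_pos with rfl | hn
  · simp
  have hn' : (0 : ℝ) < n := by exact_mod_cast hn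
  have hlog : Real.log n ≤ (n : ℝ) ^ (1 / 2 : ℝ) / (1 / 2) :=
    Real.log_le_rpow_div hn'.le (by norm_num)
  calc Real.log n / (n : ℝ) ^ 2 ≤ (n : ℝ) ^ (1 / 2 : ℝ) / (1 / 2) / (n : ℝ) ^ 2 := by gcongr
    _ = 2 * (n : ℝ) ^ (-(3 / 2) : ℝ) := by
      rw [div_div, ← Real.rpow_natCast, mul_comm, ← div_div, ← Real.rpow_sub hn']
      norm_num
      ring

lemma summable_log_div_sq : Summable fun n : ℕ => Real.log n / (n : ℝ) ^ 2 :=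
  ((Real.summable_nat_rpow.mpr (by norm_num)).mul_left 2).of_nonneg_of_le
    (fun n => div_nonneg (Real.log_natCast_nonneg n) (sq_nonneg _)) log_div_sq_le_two_mul_rpow

lemma sum_log_div_sq_le_tsum (s : Finset ℕ) :
    ∑ n ∈ s, Real.log n / (n : ℝ) ^ 2 ≤ ∑' n : ℕ, Real.log n / (n : ℝ) ^ 2 :=
  summable_log_div_sq.sum_le_tsum s fun n _ => div_nonneg (Real.log_natCast_nonneg n) (sq_nonneg _)

lemma sum_Icc_vonMangoldt_prime_pow_div_le {p : ℕ} (hp : p.Prime) (K : ℕ) :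
    ∑ k ∈ Icc 2 K, Λ (p ^ k) / ((p ^ k : ℕ) : ℝ) ≤ 2 * (Real.log p / (p : ℝ) ^ 2) := by
  have hp2 : (2 : ℝ) ≤ p := by exact_mod_cast hp.two_le
  have hr : (1 / p : ℝ) ≤ 1 / 2 := by gcongr
  have hterm : ∀ k ∈ Icc 2 K, Λ (p ^ k) / ((p ^ k : ℕ) : ℝ) = Real.log p * (1 / p : ℝ) ^ k :=
    fun k hk => by
      rw [vonMangoldt_apply_pow (by grind), vonMangoldt_apply_prime hp]
      push_cast
      ring
  calc ∑ k ∈ Icc 2 K, Λ (p ^ k) / ((p ^ k : ℕ) : ℝ)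
      = Real.log p * ∑ k ∈ Ico 2 (K + 1), (1 / p : ℝ) ^ k := by
        rw [sum_congr rfl hterm, ← mul_sum]; rfl
    _ ≤ Real.log p * ((1 / p : ℝ) ^ 2 / (1 - 1 / p)) := by
        gcongr
        exact geom_sum_Ico_le_of_lt_one (by positivity) (by linarith)
    _ ≤ Real.log p * ((1 / p : ℝ) ^ 2 / (1 / 2)) := by
        gcongr
        linarith
    _ = 2 * (Real.log p / (p : ℝ) ^ 2) := by ring

lemma mem_image_prime_pow_of_not_prime {N d : ℕ} (hd : d ∈ Icc 1 N) (hpp : IsPrimePow d)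
    (hnp : ¬ d.Prime) :
    d ∈ ((Icc 1 N).filter Nat.Prime ×ˢ Icc 2 N).image fun pk => pk.1 ^ pk.2 := by
  obtain ⟨p, k, hp, hk, rfl⟩ := (isPrimePow_nat_iff d).mp hpp
  have hk2 : 2 ≤ k := by
    have : k ≠ 1 := by rintro rfl; exact hnp (by simpa using hp)
    omega
  have hkN : k ≤ N := calc
    k ≤ 2 ^ k := Nat.lt_two_pow_self.le
    _ ≤ p ^ k := Nat.pow_le_pow_left hp.two_le k
    _ ≤ N := (mem_Icc.mp hd).2
  have hpN : p ≤ N := (Nat.le_self_pow hk.ne' p).trans (mem_Icc.mp hd).2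
  exact mem_image.mpr ⟨(p, k), by simp [hp, hp.one_le, hpN, hk2, hkN], rfl⟩

lemma sum_vonMangoldt_div_not_prime_le (N : ℕ) :
    ∑ d ∈ Icc 1 N with ¬ d.Prime, Λ d / d ≤ 2 * ∑' n : ℕ, Real.log n / (n : ℝ) ^ 2 := by
  set P := (Icc 1 N).filter Nat.Prime
  have hnonneg : ∀ d : ℕ, 0 ≤ Λ d / d := fun d => div_nonneg vonMangoldt_nonneg d.cast_nonneg
  calc ∑ d ∈ Icc 1 N with ¬ d.Prime, Λ d / d
      = ∑ d ∈ (Icc 1 N).filter (fun d => ¬ d.Prime) with IsPrimePow d, Λ d / d :=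
        (sum_filter_of_ne fun d _ h => by
          by_contra hd; exact h (by rw [vonMangoldt_apply, if_neg hd, zero_div])).symm
    _ ≤ ∑ d ∈ (P ×ˢ Icc 2 N).image (fun pk => pk.1 ^ pk.2), Λ d / d := by
        refine sum_le_sum_of_subset_of_nonneg (fun d hd => ?_) fun d _ _ => hnonneg d
        simp only [mem_filter] at hd
        exact mem_image_prime_pow_of_not_prime hd.1.1 hd.2 hd.1.2
    _ ≤ ∑ pk ∈ P ×ˢ Icc 2 N, Λ (pk.1 ^ pk.2) / ((pk.1 ^ pk.2 : ℕ) : ℝ) :=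
        sum_image_le_of_nonneg fun d _ => hnonneg d
    _ = ∑ p ∈ P, ∑ k ∈ Icc 2 N, Λ (p ^ k) / ((p ^ k : ℕ) : ℝ) := sum_product _ _ _
    _ ≤ ∑ p ∈ P, 2 * (Real.log p / (p : ℝ) ^ 2) :=
        sum_le_sum fun p hp => sum_Icc_vonMangoldt_prime_pow_div_le (mem_filter.mp hp).2 N
    _ ≤ 2 * ∑' n : ℕ, Real.log n / (n : ℝ) ^ 2 := by
        rw [← mul_sum]
        gcongr
        exact sum_log_div_sq_le_tsum P

lemma sum_Icc_sum_divisorsAntidiagonal {M : Type*} [AddCommMonoid M] (N : ℕ) (g : ℕ → ℕ → M) :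
    ∑ n ∈ Icc 1 N, ∑ dm ∈ n.divisorsAntidiagonal, g dm.1 dm.2
      = ∑ d ∈ Icc 1 N, ∑ m ∈ Icc 1 (N / d), g d m := by
  rw [sum_sigma', sum_sigma']
  refine sum_nbij' (fun a => ⟨a.2.1, a.2.2⟩) (fun a => ⟨a.1 * a.2, (a.1, a.2)⟩) ?_ ?_ ?_ ?_ ?_
  · rintro ⟨n, d, m⟩ h
    simp only [mem_sigma, mem_Icc, Nat.mem_divisorsAntidiagonal] at h ⊢
    obtain ⟨⟨-, hnN⟩, rfl, hn0⟩ := h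
    have hd : 0 < d := Nat.pos_of_ne_zero (left_ne_zero_of_mul hn0)
    have hm : 0 < m := Nat.pos_of_ne_zero (right_ne_zero_of_mul hn0)
    refine ⟨⟨hd, (Nat.le_mul_of_pos_right d hm).trans hnN⟩, hm, ?_⟩
    rw [Nat.le_div_iff_mul_le hd, mul_comm]
    exact hnN
  · rintro ⟨d, m⟩ h
    simp only [mem_sigma, mem_Icc, Nat.mem_divisorsAntidiagonal] at h ⊢
    obtain ⟨⟨hd, -⟩, hm, hmN⟩ := h
    rw [Nat.le_div_iff_mul_le hd, mul_comm] at hmN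
    exact ⟨⟨Nat.mul_pos hd hm, hmN⟩, trivial, (Nat.mul_pos hd hm).ne'⟩
  · rintro ⟨n, d, m⟩ h
    simp only [mem_sigma, Nat.mem_divisorsAntidiagonal] at h
    simp [h.2.1]
  · intro _ _; rfl
  · intro _ _; rfl

lemma sum_Icc_mul_log_eq_sum_vonMangoldt (f : ℕ → ℂ) (N : ℕ) :
    ∑ n ∈ Icc 1 N, f n * (Real.log n : ℂ)
      = ∑ d ∈ Icc 1 N, (Λ d : ℂ) * ∑ m ∈ Icc 1 (N / d), f (d * m) := by
  have hlog : ∀ n : ℕ, f n * (Real.log n : ℂ)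
      = ∑ dm ∈ n.divisorsAntidiagonal, (Λ dm.1 : ℂ) * f (dm.1 * dm.2) := fun n => by
    rw [sum_congr rfl fun dm hdm => by rw [(Nat.mem_divisorsAntidiagonal.mp hdm).1],
      ← sum_mul, Nat.sum_divisorsAntidiagonal (fun d _ => (Λ d : ℂ)), ← Complex.ofReal_sum,
      vonMangoldt_sum, mul_comm]
  simp only [hlog, mul_sum]
  exact sum_Icc_sum_divisorsAntidiagonal N fun d m => (Λ d : ℂ) * f (d * m)

lemma sum_Icc_mul_log_sub_eq_not_prime_part_add_prime_part (f : ℕ → ℂ) (N : ℕ) :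
    (∑ n ∈ Icc 1 N, f n * (Real.log n : ℂ))
      - ∑ p ∈ Icc 1 N with p.Prime, ∑ m ∈ Icc 1 (N / p), f m * f p * (Real.log p : ℂ)
      = (∑ d ∈ Icc 1 N with ¬ d.Prime, (Λ d : ℂ) * ∑ m ∈ Icc 1 (N / d), f (d * m))
        + ∑ p ∈ Icc 1 N with p.Prime, ((Λ p : ℂ) * ∑ m ∈ Icc 1 (N / p), f (p * m)
          - ∑ m ∈ Icc 1 (N / p), f m * f p * (Real.log p : ℂ)) := by
  rw [sum_Icc_mul_log_eq_sum_vonMangoldt, ← sum_filter_add_sum_filter_not (Icc 1 N) Nat.Prime,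
    sum_sub_distrib]
  ring

section Multiplicative

variable {f : ℕ → ℂ}

lemma norm_sum_apply_prime_mul_sub_le (hmul : ∀ m n : ℕ, Nat.Coprime m n → f (m * n) = f m * f n)
    (hbd : ∀ n : ℕ, ‖f n‖ ≤ 1) {p : ℕ} (hp : p.Prime) (M : ℕ) :
    ‖∑ m ∈ Icc 1 M, (f (p * m) - f m * f p)‖ ≤ 2 * ((M / p : ℕ) : ℝ) := by
  have hcoprime : ∀ m ∈ Icc 1 M, f (p * m) - f m * f p ≠ 0 → p ∣ m := fun m _ h => by
    by_contra hpm
    exact h (by rw [hmul p m ((Nat.Prime.coprime_iff_not_dvd hp).mpr hpm), mul_comm, sub_self])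
  have hterm : ∀ m, ‖f (p * m) - f m * f p‖ ≤ 2 := fun m => calc
    ‖f (p * m) - f m * f p‖ ≤ ‖f (p * m)‖ + ‖f m‖ * ‖f p‖ := by
      rw [← norm_mul]; exact norm_sub_le _ _
    _ ≤ 1 + 1 * 1 := by gcongr <;> exact hbd _
    _ = 2 := by norm_num
  rw [← sum_filter_of_ne hcoprime]
  calc ‖∑ m ∈ Icc 1 M with p ∣ m, (f (p * m) - f m * f p)‖
      ≤ ∑ m ∈ Icc 1 M with p ∣ m, 2 := norm_sum_le_of_le _ fun m _ => hterm m
    _ = 2 * ((M / p : ℕ) : ℝ) := by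
      rw [sum_const, nsmul_eq_mul, mul_comm, ← Nat.Ioc_filter_dvd_card_eq_div]
      rfl

lemma norm_vonMangoldt_mul_sum_sub_le
    (hmul : ∀ m n : ℕ, Nat.Coprime m n → f (m * n) = f m * f n)
    (hbd : ∀ n : ℕ, ‖f n‖ ≤ 1) {p : ℕ} (hp : p.Prime) (N : ℕ) :
    ‖(Λ p : ℂ) * ∑ m ∈ Icc 1 (N / p), f (p * m) - ∑ m ∈ Icc 1 (N / p), f m * f p * (Real.log p : ℂ)‖
      ≤ 2 * N * (Real.log p / (p : ℝ) ^ 2) := by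
  have hlog : 0 ≤ Real.log p := Real.log_natCast_nonneg p
  have hfactor : (Λ p : ℂ) * ∑ m ∈ Icc 1 (N / p), f (p * m)
      - ∑ m ∈ Icc 1 (N / p), f m * f p * (Real.log p : ℂ)
      = (Real.log p : ℂ) * ∑ m ∈ Icc 1 (N / p), (f (p * m) - f m * f p) := by
    rw [vonMangoldt_apply_prime hp, mul_sum, mul_sum, ← sum_sub_distrib]
    exact sum_congr rfl fun m _ => by ring
  have hcount : ((N / p / p : ℕ) : ℝ) ≤ N / (p : ℝ) ^ 2 := by
    rw [Nat.div_div_eq_div_mul, sq]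
    exact_mod_cast Nat.cast_div_le
  rw [hfactor, norm_mul, Complex.norm_real, Real.norm_of_nonneg hlog]
  calc Real.log p * ‖∑ m ∈ Icc 1 (N / p), (f (p * m) - f m * f p)‖
      ≤ Real.log p * (2 * ((N / p / p : ℕ) : ℝ)) := by
        gcongr; exact norm_sum_apply_prime_mul_sub_le hmul hbd hp _
    _ ≤ Real.log p * (2 * (N / (p : ℝ) ^ 2)) := by gcongr
    _ = 2 * N * (Real.log p / (p : ℝ) ^ 2) := by ring

lemma norm_sum_prime_part_le (hmul : ∀ m n : ℕ, Nat.Coprime m n → f (m * n) = f m * f n)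
    (hbd : ∀ n : ℕ, ‖f n‖ ≤ 1) (N : ℕ) :
    ‖∑ p ∈ Icc 1 N with p.Prime, ((Λ p : ℂ) * ∑ m ∈ Icc 1 (N / p), f (p * m)
        - ∑ m ∈ Icc 1 (N / p), f m * f p * (Real.log p : ℂ))‖
      ≤ 2 * (∑' n : ℕ, Real.log n / (n : ℝ) ^ 2) * N := by
  calc _ ≤ ∑ p ∈ Icc 1 N with p.Prime, 2 * N * (Real.log p / (p : ℝ) ^ 2) :=
        norm_sum_le_of_le _ fun p hp =>
          norm_vonMangoldt_mul_sum_sub_le hmul hbd (mem_filter.mp hp).2 N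
    _ ≤ 2 * N * ∑' n : ℕ, Real.log n / (n : ℝ) ^ 2 := by
        rw [← mul_sum]; gcongr; exact sum_log_div_sq_le_tsum _
    _ = _ := by ring

lemma norm_sum_not_prime_part_le (hbd : ∀ n : ℕ, ‖f n‖ ≤ 1) (N : ℕ) :
    ‖∑ d ∈ Icc 1 N with ¬ d.Prime, (Λ d : ℂ) * ∑ m ∈ Icc 1 (N / d), f (d * m)‖
      ≤ 2 * (∑' n : ℕ, Real.log n / (n : ℝ) ^ 2) * N := by
  have hterm : ∀ d, ‖(Λ d : ℂ) * ∑ m ∈ Icc 1 (N / d), f (d * m)‖ ≤ N * (Λ d / d) := fun d => by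
    have hinner : ‖∑ m ∈ Icc 1 (N / d), f (d * m)‖ ≤ ((N / d : ℕ) : ℝ) := by
      simpa using norm_sum_le_of_le (Icc 1 (N / d)) fun m _ => hbd (d * m)
    rw [norm_mul, Complex.norm_real, Real.norm_of_nonneg vonMangoldt_nonneg, mul_div,
      mul_comm (N : ℝ), ← mul_div]
    gcongr
    exact hinner.trans Nat.cast_div_le
  calc _ ≤ ∑ d ∈ Icc 1 N with ¬ d.Prime, N * (Λ d / d) := norm_sum_le_of_le _ fun d _ => hterm d
    _ ≤ N * (2 * ∑' n : ℕ, Real.log n / (n : ℝ) ^ 2) := by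
        rw [← mul_sum]; gcongr; exact sum_vonMangoldt_div_not_prime_le N
    _ = _ := by ring

end Multiplicative

theorem stmt0 :
    ∃ C : ℝ, 0 < C ∧ ∀ x : ℝ, 2 ≤ x → ∀ f : ℕ → ℂ, f 1 = 1 →
      (∀ m n : ℕ, Nat.Coprime m n → f (m * n) = f m * f n) →
      (∀ n : ℕ, ‖f n‖ ≤ 1) →
      ‖(∑ n ∈ Finset.Icc 1 ⌊x⌋₊, f n * (Real.log n : ℂ)) -
        ∑ p ∈ primesUpTo x, ∑ m ∈ Finset.Icc 1 ⌊x / p⌋₊,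
          f m * f p * (Real.log p : ℂ)‖ ≤ C * x := by
  set c := ∑' n : ℕ, Real.log n / (n : ℝ) ^ 2
  have hc : 0 ≤ c := tsum_nonneg fun n => div_nonneg (Real.log_natCast_nonneg n) (sq_nonneg _)
  refine ⟨4 * c + 1, by positivity, fun x hx f _ hmul hbd => ?_⟩
  set N := ⌊x⌋₊
  have hNx : (N : ℝ) ≤ x := Nat.floor_le (by linarith)
  have hprimes : ∑ p ∈ primesUpTo x, ∑ m ∈ Icc 1 ⌊x / p⌋₊, f m * f p * (Real.log p : ℂ)
      = ∑ p ∈ Icc 1 N with p.Prime, ∑ m ∈ Icc 1 (N / p), f m * f p * (Real.log p : ℂ) := by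
    simp only [primesUpTo, Nat.floor_div_natCast, N]
  rw [hprimes, sum_Icc_mul_log_sub_eq_not_prime_part_add_prime_part]
  calc _ ≤ 2 * c * N + 2 * c * N :=
        (norm_add_le _ _).trans
          (add_le_add (norm_sum_not_prime_part_le hbd N) (norm_sum_prime_part_le hmul hbd N))
    _ ≤ (4 * c + 1) * x := by nlinarith
end

section
/- Let f be multiplicative with |f(n)| ≤ 1, x ≥ 16, and for an integer k ≥ 1 let P_k be the set of primes p with (log x)^4 < p ≤ x/2 and x^{1-e^{1-k}} < p ≤ x^{1-e^{-k}}. Then |S_k(x)| ≤ ∑_{p ∈ P_k} ∑_{q prime, pq ≤ x} ((log p)(log q)/log(x/p)) · ⌊x/(pq)⌋ ≪ e^{-k} x log x, where S_k(x) = ∑_{pqn ≤ x, p ∈ P_k} (f(p) log p / log(x/p)) f(n) f(q) log q and the implied constant is absolute. -/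
open Finset MeasureTheory
open scoped Classical BigOperators

/-!
Each inner sum is at most `x log p / (p log(x/p)) · ∑_{q ≤ x/p} log q / q`, and the Mertens-type
bound `∑_{a < q ≤ b} log q / q ≤ 4 log(2b/a)` (from Chebyshev's `θ(2y) ≤ 2y log 4` on dyadic
blocks) cancels the `log(x/p)`. The outer sum is then `≪ x ∑_{p ∈ P_k} log p / p`, and `P_k` lies
in an interval with `log(b/a) = (e - 1) e^{-k} log x`; the additive `log 2` is absorbed because
`P_k ≠ ∅` forces `x^{1-e^{1-k}} < x/2`, i.e. `log 2 < e^{1-k} log x`.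
-/

open Real Chebyshev

theorem sum_log_div_self_le_of_mem_Ioc_two_mul {y : ℝ} (hy : 0 < y) {s : Finset ℕ}
    (hs : ∀ p ∈ s, p.Prime ∧ y < p ∧ (p : ℝ) ≤ 2 * y) :
    ∑ p ∈ s, log p / p ≤ 2 * log 4 := by
  have hθ : ∑ p ∈ s, log p ≤ θ (2 * y) := by
    rw [theta]
    refine sum_le_sum_of_subset_of_nonneg (fun p hp => ?_) fun p _ _ => log_natCast_nonneg p
    obtain ⟨hpp, -, hp2y⟩ := hs p hp
    simpa [hpp, hpp.pos] using (Nat.le_floor_iff (by positivity)).2 hp2y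
  calc ∑ p ∈ s, log p / p ≤ ∑ p ∈ s, log p / y :=
        sum_le_sum fun p hp => div_le_div_of_nonneg_left (log_natCast_nonneg p) hy (hs p hp).2.1.le
    _ = (∑ p ∈ s, log p) / y := (sum_div ..).symm
    _ ≤ log 4 * (2 * y) / y := by gcongr; exact hθ.trans (theta_le_log4_mul_x (by positivity))
    _ = 2 * log 4 := by field_simp

theorem sum_log_div_self_le_of_mem_Ioc_two_pow_mul {a : ℝ} (ha : 0 < a) (J : ℕ) {s : Finset ℕ}
    (hs : ∀ p ∈ s, p.Prime ∧ a < p ∧ (p : ℝ) ≤ 2 ^ J * a) :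
    ∑ p ∈ s, log p / p ≤ J * (2 * log 4) := by
  induction J generalizing s with
  | zero =>
    have : s = ∅ := eq_empty_of_forall_notMem fun p hp => by
      have := hs p hp; simp at this; linarith
    simp [this]
  | succ J ih =>
    rw [← sum_filter_add_sum_filter_not s (fun p : ℕ => (p : ℝ) ≤ 2 ^ J * a)]
    have hlow := ih (s := s.filter (fun p : ℕ => (p : ℝ) ≤ 2 ^ J * a)) fun p hp => by
      rw [mem_filter] at hp; exact ⟨(hs p hp.1).1, (hs p hp.1).2.1, hp.2⟩
    have hhigh := sum_log_div_self_le_of_mem_Ioc_two_mul (y := 2 ^ J * a) (by positivity)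
      (s := s.filter (fun p : ℕ => ¬ (p : ℝ) ≤ 2 ^ J * a)) fun p hp => by
        rw [mem_filter] at hp
        exact ⟨(hs p hp.1).1, not_le.1 hp.2, by rw [← mul_assoc, ← pow_succ']; exact (hs p hp.1).2.2⟩
    push_cast
    linarith

theorem sum_log_div_self_le_of_mem_Ioc {a b : ℝ} (ha : 0 < a) (hab : a ≤ b) {s : Finset ℕ}
    (hs : ∀ p ∈ s, p.Prime ∧ a < p ∧ (p : ℝ) ≤ b) :
    ∑ p ∈ s, log p / p ≤ 4 * log (2 * b / a) := by
  set J := ⌈logb 2 (b / a)⌉₊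
  have hba : 1 ≤ b / a := (one_le_div ha).2 hab
  have hJ : (J : ℝ) < logb 2 (b / a) + 1 := Nat.ceil_lt_add_one (logb_nonneg one_lt_two hba)
  have hb : b ≤ 2 ^ J * a := by
    rw [← div_le_iff₀ ha, ← rpow_natCast]
    calc b / a = 2 ^ logb 2 (b / a) := (rpow_logb two_pos one_lt_two.ne' (by positivity)).symm
      _ ≤ 2 ^ (J : ℝ) := rpow_le_rpow_of_exponent_le one_le_two (Nat.le_ceil _)
  calc ∑ p ∈ s, log p / p ≤ J * (2 * log 4) :=
        sum_log_div_self_le_of_mem_Ioc_two_pow_mul ha J fun p hp =>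
          ⟨(hs p hp).1, (hs p hp).2.1, (hs p hp).2.2.trans hb⟩
    _ ≤ (logb 2 (b / a) + 1) * (2 * log 4) := by gcongr
    _ = 4 * log (2 * b / a) := by
      have : log 4 = 2 * log 2 := by
        rw [show (4 : ℝ) = 2 ^ 2 by norm_num, log_pow]; norm_num
      rw [this, logb, mul_div_assoc, log_mul two_ne_zero (by positivity)]
      field_simp
      ring

theorem prime_and_le_of_mem_primesUpTo {y : ℝ} (hy : 0 ≤ y) {q : ℕ} (hq : q ∈ primesUpTo y) :
    q.Prime ∧ (q : ℝ) ≤ y := by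
  rw [primesUpTo, mem_filter, mem_Icc] at hq
  exact ⟨hq.2, (Nat.le_floor_iff hy).1 hq.1.2⟩

theorem sum_primesUpTo_log_div_self_le {y : ℝ} (hy : 2 ≤ y) :
    ∑ q ∈ primesUpTo y, log q / q ≤ 8 * log y := by
  have hs : ∀ q ∈ primesUpTo y, q.Prime ∧ (1 : ℝ) < q ∧ (q : ℝ) ≤ y := fun q hq => by
    obtain ⟨hqp, hqy⟩ := prime_and_le_of_mem_primesUpTo (by linarith) hq
    exact ⟨hqp, by exact_mod_cast hqp.one_lt, hqy⟩
  calc ∑ q ∈ primesUpTo y, log q / q ≤ 4 * log (2 * y / 1) :=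
        sum_log_div_self_le_of_mem_Ioc one_pos (by linarith) hs
    _ = 4 * (log 2 + log y) := by rw [div_one, log_mul two_ne_zero (by positivity)]
    _ ≤ 8 * log y := by linarith [log_le_log two_pos hy]

theorem two_le_div_of_mem_Pk {x : ℝ} {k p : ℕ} (hp : p ∈ Pk x k) : 2 ≤ x / p := by
  have hp' := (mem_filter.1 hp).2
  have : (0 : ℝ) < p := by exact_mod_cast hp'.1.pos
  rw [le_div_iff₀ this]
  linarith [hp'.2.2.1]

theorem norm_mul_div_mul_mul_mul_le {z₁ z₂ z₃ : ℂ} (h₁ : ‖z₁‖ ≤ 1) (h₂ : ‖z₂‖ ≤ 1)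
    (h₃ : ‖z₃‖ ≤ 1) (α β γ : ℝ) :
    ‖z₁ * α / γ * z₂ * z₃ * β‖ ≤ |α * β / γ| := by
  simp only [norm_mul, norm_div, Complex.norm_real, Real.norm_eq_abs, abs_mul, abs_div]
  calc ‖z₁‖ * |α| / |γ| * ‖z₂‖ * ‖z₃‖ * |β| ≤ 1 * |α| / |γ| * 1 * 1 * |β| := by gcongr
    _ = |α| * |β| / |γ| := by ring

theorem norm_Sk_le {f : ℕ → ℂ} (hf : ∀ n, ‖f n‖ ≤ 1) (x : ℝ) (k : ℕ) :
    ‖Sk f x k‖ ≤ ∑ p ∈ Pk x k, ∑ q ∈ primesUpTo (x / p),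
      (log p * log q / log (x / p)) * (⌊x / (p * q)⌋₊ : ℝ) := by
  refine (norm_sum_le _ _).trans (sum_le_sum fun p hp => ?_)
  refine (norm_sum_le _ _).trans (sum_le_sum fun q _ => ?_)
  have hcoef : 0 ≤ log p * log q / log (x / p) :=
    div_nonneg (mul_nonneg (log_natCast_nonneg p) (log_natCast_nonneg q))
      (log_nonneg (by linarith [two_le_div_of_mem_Pk hp]))
  calc _ ≤ ∑ _n ∈ Icc 1 ⌊x / (p * q)⌋₊, |log p * log q / log (x / p)| :=
        norm_sum_le_of_le _ fun n _ => norm_mul_div_mul_mul_mul_le (hf p) (hf n) (hf q) ..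
    _ = _ := by rw [sum_const, Nat.card_Icc, abs_of_nonneg hcoef, nsmul_eq_mul, mul_comm]; simp

theorem sum_primesUpTo_mul_floor_le {x : ℝ} {p : ℕ} (hp : 0 < p) (hxp : 2 ≤ x / p) :
    ∑ q ∈ primesUpTo (x / p), (log p * log q / log (x / p)) * (⌊x / (p * q)⌋₊ : ℝ) ≤
      8 * x * (log p / p) := by
  have hp' : (0 : ℝ) < p := by exact_mod_cast hp
  have hx : 0 < x := (div_pos_iff_of_pos_right hp').1 (by linarith)
  have hL : 0 < log (x / p) := log_pos (by linarith)
  calc _ ≤ ∑ q ∈ primesUpTo (x / p), x * log p / (p * log (x / p)) * (log q / q) := by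
        refine sum_le_sum fun q _ => ?_
        calc _ ≤ (log p * log q / log (x / p)) * (x / (p * q)) := by
              gcongr
              exact Nat.floor_le (by positivity)
          _ = _ := by field_simp
    _ = x * log p / (p * log (x / p)) * ∑ q ∈ primesUpTo (x / p), log q / q := (mul_sum ..).symm
    _ ≤ x * log p / (p * log (x / p)) * (8 * log (x / p)) := by
        gcongr
        exact sum_primesUpTo_log_div_self_le hxp
    _ = 8 * x * (log p / p) := by field_simp

theorem sum_Pk_log_div_self_le {x : ℝ} (hx : 1 < x) (k : ℕ) :
    ∑ p ∈ Pk x k, log p / p ≤ 18 * (exp (-k) * log x) := by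
  have hlogx : 0 < log x := log_pos hx
  rcases (Pk x k).eq_empty_or_nonempty with hempty | ⟨p₀, hp₀⟩
  · rw [hempty, sum_empty]; positivity
  set a := x ^ (1 - exp (1 - k))
  set b := x ^ (1 - exp (-k))
  have hexp : exp (1 - k) = exp 1 * exp (-k) := by rw [← exp_add]; ring_nf
  have hloga : log a = log x - exp 1 * (exp (-k) * log x) := by
    rw [log_rpow (by linarith), hexp]; ring
  have hlogb : log b = log x - exp (-k) * log x := by rw [log_rpow (by linarith)]; ring
  have ha : 0 < a := by positivity
  have hab : a ≤ b := rpow_le_rpow_of_exponent_le hx.le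
    (by gcongr; linarith)
  have hlog2 : log 2 < exp 1 * (exp (-k) * log x) := by
    have hp₀' := (mem_filter.1 hp₀).2
    have := log_lt_log ha (hp₀'.2.2.2.1.trans_le hp₀'.2.2.1)
    rw [hloga, log_div (by linarith) two_ne_zero] at this
    linarith
  have hs : ∀ p ∈ Pk x k, p.Prime ∧ a < p ∧ (p : ℝ) ≤ b := fun p hp => by
    have hp' := (mem_filter.1 hp).2
    exact ⟨hp'.1, hp'.2.2.2.1, hp'.2.2.2.2⟩
  have he : exp 1 < 2.7182818286 := exp_one_lt_d9
  have hu : 0 < exp (-k) * log x := by positivity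
  calc ∑ p ∈ Pk x k, log p / p ≤ 4 * log (2 * b / a) := sum_log_div_self_le_of_mem_Ioc ha hab hs
    _ = 4 * (log 2 + (exp 1 - 1) * (exp (-k) * log x)) := by
        rw [mul_div_assoc, log_mul two_ne_zero (by positivity), log_div (by positivity) ha.ne',
          hloga, hlogb]
        ring
    _ ≤ 18 * (exp (-k) * log x) := by nlinarith

theorem stmt6 :
    ∃ C : ℝ, 0 < C ∧ ∀ x : ℝ, 16 ≤ x → ∀ k : ℕ, 1 ≤ k →
      ∀ f : ℕ → ℂ, f 1 = 1 →
      (∀ m n : ℕ, Nat.Coprime m n → f (m * n) = f m * f n) →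
      (∀ n : ℕ, ‖f n‖ ≤ 1) →
      ‖Sk f x k‖ ≤
        (∑ p ∈ Pk x k, ∑ q ∈ primesUpTo (x / p),
          (Real.log p * Real.log q / Real.log (x / p)) * (⌊x / (p * q)⌋₊ : ℝ)) ∧
      (∑ p ∈ Pk x k, ∑ q ∈ primesUpTo (x / p),
          (Real.log p * Real.log q / Real.log (x / p)) * (⌊x / (p * q)⌋₊ : ℝ))
        ≤ C * Real.exp (-(k : ℝ)) * x * Real.log x := by
  refine ⟨144, by norm_num, fun x hx k _ f _ _ hf => ⟨norm_Sk_le hf x k, ?_⟩⟩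
  calc _ ≤ ∑ p ∈ Pk x k, 8 * x * (log p / p) := sum_le_sum fun p hp =>
        sum_primesUpTo_mul_floor_le (mem_filter.1 hp).2.1.pos (two_le_div_of_mem_Pk hp)
    _ = 8 * x * ∑ p ∈ Pk x k, log p / p := (mul_sum ..).symm
    _ ≤ 8 * x * (18 * (exp (-k) * log x)) := by
        gcongr
        exact sum_Pk_log_div_self_le (by linarith) k
    _ = 144 * exp (-k) * x * log x := by ring
end
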